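/- The reduction →_r of the call-by-value resource calculus (comprising the β_r rule, the 0 rule, and the σ₁, σ₃ rules, contextually closed on finite sets of resource terms) is strongly normalizing. -/

import Mathlib

/-!
Every term of a one-step reduct of a resource term `e` is smaller than `e` for the
lexicographic order on (size, weight): linear substitution never duplicates, so β_r strictly
decreases the size, while σ₁ and σ₃ only rearrange the term and strictly decrease a
multiplicative weight. A step on a term moreover yields finitely many terms. Hence a step on a
finite set replaces one of its elements by finitely many smaller ones, a move of the hydra game
(`Relation.CutExpand`) for this well-founded order, and such moves are well-founded.
-/


/-- λ-terms possibly containing the constant ⊥ (Λ⊥). Pure λ-terms are those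
satisfying `NoBot`. Variables are natural numbers. -/
inductive Tm : Type
  | var : ℕ → Tm
  | lam : ℕ → Tm → Tm
  | app : Tm → Tm → Tm
  | bot : Tm
deriving DecidableEq

namespace Tm

/-- Values of Λ⊥: ⊥, variables and abstractions. -/
def IsVal : Tm → Prop
  | var _ => True
  | lam _ _ => True
  | bot => True
  | app _ _ => False

/-- A term is a pure λ-term when it contains no occurrence of ⊥. -/
def NoBot : Tm → Prop
  | var _ => True
  | lam _ M => NoBot M
  | app M N => NoBot M ∧ NoBot N
  | bot => False

/-- `FV x M` : the variable `x` occurs free in `M`. -/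
inductive FV : ℕ → Tm → Prop
  | var : ∀ x, FV x (var x)
  | lam : ∀ {x y M}, x ≠ y → FV x M → FV x (lam y M)
  | appL : ∀ {x M N}, FV x M → FV x (app M N)
  | appR : ∀ {x M N}, FV x N → FV x (app M N)

/-- Capture-avoiding substitution `M[x := N]` (bound variables are assumed to
be suitably renamed, so we substitute naively under binders `≠ x`). -/
def subst : Tm → ℕ → Tm → Tm
  | var y, x, N => if y = x then N else var y
  | lam y P, x, N => if y = x then lam y P else lam y (subst P x N)
  | app P Q, x, N => app (subst P x N) (subst Q x N)
  | bot, _, _ => bot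

/-- The v-reduction: contextual closure of the rules β_v, σ₁ and σ₃. -/
inductive Step : Tm → Tm → Prop
  | beta : ∀ {x M V}, IsVal V → Step (app (lam x M) V) (subst M x V)
  | sigma1 : ∀ {x M N P}, ¬ FV x P →
      Step (app (app (lam x M) N) P) (app (lam x (app M P)) N)
  | sigma3 : ∀ {x V M N}, IsVal V → ¬ FV x V →
      Step (app V (app (lam x M) N)) (app (lam x (app V M)) N)
  | appL : ∀ {M M' N}, Step M M' → Step (app M N) (app M' N)
  | appR : ∀ {M N N'}, Step N N' → Step (app M N) (app M N')
  | lam : ∀ {x M M'}, Step M M' → Step (lam x M) (lam x M')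

/-- The σ-reduction: contextual closure of the rules σ₁ and σ₃ only. -/
inductive SStep : Tm → Tm → Prop
  | sigma1 : ∀ {x M N P}, ¬ FV x P →
      SStep (app (app (lam x M) N) P) (app (lam x (app M P)) N)
  | sigma3 : ∀ {x V M N}, IsVal V → ¬ FV x V →
      SStep (app V (app (lam x M) N)) (app (lam x (app V M)) N)
  | appL : ∀ {M M' N}, SStep M M' → SStep (app M N) (app M' N)
  | appR : ∀ {M N N'}, SStep N N' → SStep (app M N) (app M N')
  | lam : ∀ {x M M'}, SStep M M' → SStep (lam x M) (lam x M')

/-- A term is in v-normal form when no v-reduction step applies. -/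
def VNormal (M : Tm) : Prop := ∀ N, ¬ Step M N

mutual
  /-- Grammar of v-normal forms: general normal forms `G ::= H | R`. -/
  inductive IsG : Tm → Prop
    | ofH : ∀ {t}, IsH t → IsG t
    | ofR : ∀ {t}, IsR t → IsG t
  /-- head normal forms `H ::= x | λx.G | x H G₁ ⋯ G_k`. -/
  inductive IsH : Tm → Prop
    | var : ∀ x, IsH (var x)
    | lam : ∀ {x t}, IsG t → IsH (lam x t)
    | spine : ∀ {t}, IsHSpine t → IsH t
  /-- terms of the shape `x H G₁ ⋯ G_k` (k ≥ 0). -/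
  inductive IsHSpine : Tm → Prop
    | head : ∀ {x h}, IsH h → IsHSpine (app (var x) h)
    | app : ∀ {t g}, IsHSpine t → IsG g → IsHSpine (app t g)
  /-- redex-like normal forms `R ::= (λx.G)(y H G₁ ⋯ G_k)`. -/
  inductive IsR : Tm → Prop
    | mk : ∀ {x t s}, IsG t → IsHSpine s → IsR (app (lam x t) s)
end

mutual
  /-- The set 𝒜 of approximants: `A ::= B | C`. -/
  inductive IsA : Tm → Prop
    | ofB : ∀ {t}, IsB t → IsA t
    | ofC : ∀ {t}, IsC t → IsA t
  /-- `B ::= x | λx.A | ⊥ | x B A₁ ⋯ A_k`. -/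
  inductive IsB : Tm → Prop
    | var : ∀ x, IsB (var x)
    | lam : ∀ {x t}, IsA t → IsB (lam x t)
    | bot : IsB bot
    | spine : ∀ {t}, IsBSpine t → IsB t
  /-- terms of the shape `x B A₁ ⋯ A_k` (k ≥ 0). -/
  inductive IsBSpine : Tm → Prop
    | head : ∀ {x b}, IsB b → IsBSpine (app (var x) b)
    | app : ∀ {t a}, IsBSpine t → IsA a → IsBSpine (app t a)
  /-- `C ::= (λx.A)(y B A₁ ⋯ A_k)`. -/
  inductive IsC : Tm → Prop
    | mk : ∀ {x t s}, IsA t → IsBSpine s → IsC (app (lam x t) s)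
end

/-- The order ⊑ on Λ⊥: context-closed preorder generated by ⊥ ⊑ x, ⊥ ⊑ λx.M. -/
inductive LE : Tm → Tm → Prop
  | refl : ∀ t, LE t t
  | botVar : ∀ x, LE bot (var x)
  | botLam : ∀ x t, LE bot (lam x t)
  | lam : ∀ {x s t}, LE s t → LE (lam x s) (lam x t)
  | app : ∀ {s₁ s₂ t₁ t₂}, LE s₁ t₁ → LE s₂ t₂ → LE (app s₁ s₂) (app t₁ t₂)

/-- The set of approximants of a term:
`𝒜(M) = { A ∈ 𝒜 | ∃ N, M →*_v N and A ⊑ N }`. -/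
def ApproxOf (M : Tm) : Set Tm :=
  {A | IsA A ∧ ∃ N, Relation.ReflTransGen Step M N ∧ LE A N}

end Tm

/-- Single-hole (⊥-)contexts. -/
inductive Ctx : Type
  | hole : Ctx
  | appL : Ctx → Tm → Ctx
  | appR : Tm → Ctx → Ctx
  | lam : ℕ → Ctx → Ctx

/-- Filling the hole of a context with a term (possibly capturing variables). -/
def Ctx.fill : Ctx → Tm → Tm
  | .hole, M => M
  | .appL C N, M => .app (C.fill M) N
  | .appR N C, M => .app N (C.fill M)
  | .lam x C, M => .lam x (C.fill M)

/-- Resource terms of the CbV resource calculus: resource values are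
variables `var x` and abstractions `lam x t`; simple terms are applications
`app s t` and bags `bag [v₁,…,v_k]` (finite multisets of values, represented
as lists considered up to permutation by the rules below). -/
inductive RTm : Type
  | var : ℕ → RTm
  | lam : ℕ → RTm → RTm
  | app : RTm → RTm → RTm
  | bag : List RTm → RTm

namespace RTm

/-- Resource values. -/
def IsRVal : RTm → Prop
  | var _ => True
  | lam _ _ => True
  | _ => False

/-- Simple terms (applications and bags). -/
def IsSimple : RTm → Prop
  | app _ _ => True
  | bag _ => True
  | _ => False

/-- Free-variable occurrence predicate for resource terms. -/
inductive RFV : ℕ → RTm → Prop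
  | var : ∀ x, RFV x (var x)
  | lam : ∀ {x y t}, x ≠ y → RFV x t → RFV x (lam y t)
  | appL : ∀ {x s t}, RFV x s → RFV x (app s t)
  | appR : ∀ {x s t}, RFV x t → RFV x (app s t)
  | bag : ∀ {x t ts}, t ∈ ts → RFV x t → RFV x (bag ts)

/-- Linear substitution: `LSubst e x vs e'` holds iff `e'` is one of the terms
obtained from `e` by substituting the values `vs` bijectively for the free
occurrences of `x` in `e` (no such `e'` exists if the count mismatches). -/
inductive LSubst : RTm → ℕ → List RTm → RTm → Prop
  | varEq : ∀ x v, LSubst (var x) x [v] v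
  | varNe : ∀ {x y}, y ≠ x → LSubst (var y) x [] (var y)
  | lamEq : ∀ x t, LSubst (lam x t) x [] (lam x t)
  | lamNe : ∀ {x y t vs t'}, y ≠ x → LSubst t x vs t' →
      LSubst (lam y t) x vs (lam y t')
  | app : ∀ {s t x us ws vs s' t'}, LSubst s x us s' → LSubst t x ws t' →
      vs.Perm (us ++ ws) → LSubst (app s t) x vs (app s' t')
  | bagNil : ∀ x, LSubst (bag []) x [] (bag [])
  | bagCons : ∀ {v ts x us ws vs v' ts'}, LSubst v x us v' →
      LSubst (bag ts) x ws (bag ts') → vs.Perm (us ++ ws) →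
      LSubst (bag (v :: ts)) x vs (bag (v' :: ts'))

/-- One step of resource reduction at the level of terms, producing a
(finite) set of resource terms: rules β_r, 0, σ₁, σ₃, contextually closed. -/
inductive RStep : RTm → Set RTm → Prop
  | beta : ∀ {x t vs}, (∀ v ∈ vs, IsRVal v) →
      RStep (app (bag [lam x t]) (bag vs)) {t' | LSubst t x vs t'}
  | zero : ∀ {vs t}, (∀ v ∈ vs, IsRVal v) → vs.length ≠ 1 →
      RStep (app (bag vs) t) ∅
  | sigma1 : ∀ {x t s₁ s₂}, ¬ RFV x s₁ →
      RStep (app (app (bag [lam x t]) s₁) s₂) {app (bag [lam x (app t s₂)]) s₁}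
  | sigma3 : ∀ {v x t s}, IsRVal v → ¬ RFV x v →
      RStep (app (bag [v]) (app (bag [lam x t]) s))
        {app (bag [lam x (app (bag [v]) t)]) s}
  | appL : ∀ {s S t}, RStep s S → RStep (app s t) {u | ∃ s' ∈ S, u = app s' t}
  | appR : ∀ {s t T}, RStep t T → RStep (app s t) {u | ∃ t' ∈ T, u = app s t'}
  | lam : ∀ {x t T}, RStep t T → RStep (lam x t) {u | ∃ t' ∈ T, u = lam x t'}
  | bagHead : ∀ {v V ts}, RStep v V →
      RStep (bag (v :: ts)) {u | ∃ v' ∈ V, u = bag (v' :: ts)}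
  | bagTail : ∀ {v ts T}, RStep (bag ts) T →
      RStep (bag (v :: ts)) {u | ∃ ts', bag ts' ∈ T ∧ u = bag (v :: ts')}

/-- The resource reduction →_r lifted to sets of resource terms:
`{e} ∪ E₂ →_r E₁ ∪ E₂` whenever `e →_r E₁` and `e ∉ E₂`. -/
inductive RSetStep : Set RTm → Set RTm → Prop
  | mk : ∀ {e E₁ E₂}, RStep e E₁ → e ∉ E₂ → RSetStep (insert e E₂) (E₁ ∪ E₂)

/-- A set of resource terms is →_r-normal when no set-level step applies. -/
def RSetNormal (S : Set RTm) : Prop := ∀ S', ¬ RSetStep S S'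

/-- `NF(E) = ⋃_{e ∈ E} nf_r(e)` : the set of resource terms occurring in the
(unique, by confluence and strong normalization) →_r-normal form of some
element of `E`. -/
def NF (E : Set RTm) : Set RTm :=
  {t | ∃ e ∈ E, ∃ S, Relation.ReflTransGen RSetStep {e} S ∧ RSetNormal S ∧ t ∈ S}

/-- `HasBRS t` : `t` contains a β_r-, σ₁- or σ₃-redex (0-redexes not counted). -/
inductive HasBRS : RTm → Prop
  | beta : ∀ {x t vs}, (∀ v ∈ vs, IsRVal v) →
      HasBRS (app (bag [lam x t]) (bag vs))
  | sigma1 : ∀ {x t s₁ s₂}, ¬ RFV x s₁ → HasBRS (app (app (bag [lam x t]) s₁) s₂)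
  | sigma3 : ∀ {v x t s}, IsRVal v → ¬ RFV x v →
      HasBRS (app (bag [v]) (app (bag [lam x t]) s))
  | appL : ∀ {s t}, HasBRS s → HasBRS (app s t)
  | appR : ∀ {s t}, HasBRS t → HasBRS (app s t)
  | lam : ∀ {x t}, HasBRS t → HasBRS (lam x t)
  | bag : ∀ {t ts}, t ∈ ts → HasBRS t → HasBRS (bag ts)

mutual
  /-- The height of a resource term. -/
  def height : RTm → ℕ
    | var _ => 0
    | lam _ t => height t + 1
    | app s t => max (height s) (height t) + 1
    | bag ts => heightList ts + 1
  def heightList : List RTm → ℕ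
    | [] => 0
    | t :: ts => max (height t) (heightList ts)
end

/-- The height of a set of resource terms (possibly infinite). -/
noncomputable def hSet (E : Set RTm) : ℕ∞ := ⨆ t ∈ E, (height t : ℕ∞)

/-- The coherence relation ¨ on resource terms. -/
inductive Coh : RTm → RTm → Prop
  | var : ∀ x, Coh (var x) (var x)
  | lam : ∀ {x s t}, Coh s t → Coh (lam x s) (lam x t)
  | bag : ∀ {us vs}, (∀ a ∈ us ++ vs, ∀ b ∈ us ++ vs, Coh a b) →
      Coh (bag us) (bag vs)
  | app : ∀ {s₁ s₂ t₁ t₂}, Coh s₁ s₂ → Coh t₁ t₂ → Coh (app s₁ t₁) (app s₂ t₂)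

/-- A clique: a set of pairwise coherent resource terms. -/
def Clique (E : Set RTm) : Prop := ∀ s ∈ E, ∀ t ∈ E, Coh s t

/-- A maximal clique: no resource term can be added keeping it a clique. -/
def MaxClique (E : Set RTm) : Prop :=
  Clique E ∧ ∀ e : RTm, Clique (insert e E) → e ∈ E

end RTm
/-- The Taylor expansion: `InT M t` iff the simple term `t` belongs to 𝒯(M). -/
inductive InT : Tm → RTm → Prop
  | var : ∀ x n, InT (.var x) (.bag (List.replicate n (.var x)))
  | lam : ∀ {x N} (ts : List RTm), (∀ t ∈ ts, InT N t) →
      InT (.lam x N) (.bag (ts.map (RTm.lam x)))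
  | app : ∀ {P Q s t}, InT P s → InT Q t → InT (.app P Q) (.app s t)

/-- The Taylor expansion 𝒯(M) of a λ-term, as a set of resource terms. -/
def Taylor (M : Tm) : Set RTm := {t | InT M t}

/-- The normalized Taylor expansion of an approximant: `InTn A t` iff
`t ∈ 𝒯ⁿᶠ(A)`, following the grammar of approximants. -/
inductive InTn : Tm → RTm → Prop
  | var : ∀ x n, InTn (.var x) (.bag (List.replicate n (.var x)))
  | bot : InTn .bot (.bag [])
  | lam : ∀ {x A} (ts : List RTm), (∀ t ∈ ts, InTn A t) →
      InTn (.lam x A) (.bag (ts.map (RTm.lam x)))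
  | spineHead : ∀ {x B t}, InTn B t →
      InTn (.app (.var x) B) (.app (.bag [.var x]) t)
  | spineApp : ∀ {S A s t}, Tm.IsBSpine S → InTn S s → InTn A t →
      InTn (.app S A) (.app s t)
  | redex : ∀ {x A Q s t}, InTn A s → Tm.IsBSpine Q → InTn Q t →
      InTn (.app (.lam x A) Q) (.app (.bag [.lam x s]) t)

/-- The normalized Taylor expansion 𝒯ⁿᶠ(A) of an approximant. -/
def TaylorN (A : Tm) : Set RTm := {t | InTn A t}

lemma List.finite_setOf_subperm {α : Type*} (l : List α) :
    {l' : List α | l'.Subperm l}.Finite :=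
  (l.sublists.flatMap List.permutations).finite_toSet.subset fun _ ⟨l'', hperm, hsub⟩ =>
    List.mem_flatMap.2 ⟨l'', List.mem_sublists.2 hsub, List.mem_permutations.2 hperm.symm⟩

lemma List.subperm_of_perm_append {α : Type*} {us ws vs l : List α}
    (hperm : vs.Perm (us ++ ws)) (hvs : vs.Subperm l) : us.Subperm l ∧ ws.Subperm l :=
  have h := hperm.symm.subperm.trans hvs
  ⟨(List.sublist_append_left _ _).subperm.trans h,
    (List.sublist_append_right _ _).subperm.trans h⟩

lemma Finset.cutExpand_union_insert {α : Type*} [DecidableEq α] {r : α → α → Prop} {a : α}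
    {s t : Finset α} (ha : a ∉ s) (ht : ∀ b ∈ t, r b a) :
    Relation.CutExpand r (t ∪ s).val (insert a s).val := by
  refine ⟨(t \ s).val, a, fun b hb => ht b (Finset.mem_sdiff.1 hb).1, ?_⟩
  rw [Finset.insert_val_of_notMem ha, ← Finset.sdiff_union_self_eq_union,
    ← Finset.disjUnion_eq_union _ _ Finset.sdiff_disjoint, Finset.disjUnion_val,
    ← Multiset.singleton_add]
  abel

namespace RTm

mutual
  def size : RTm → ℕ
    | var _ => 1
    | lam _ t => size t + 1
    | app s t => size s + size t + 1
    | bag ts => sizeList ts + 1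
  def sizeList : List RTm → ℕ
    | [] => 0
    | t :: ts => size t + sizeList ts
end

mutual
  /-- Multiplicative, so that σ₁ and σ₃, which preserve `size`, strictly decrease it. -/
  def weight : RTm → ℕ
    | var _ => 2
    | lam _ t => weight t + 1
    | app s t => weight s * weight t
    | bag ts => weightList ts + 2
  def weightList : List RTm → ℕ
    | [] => 0
    | t :: ts => weight t + weightList ts
end

lemma two_le_weight : ∀ t, 2 ≤ weight t
  | var _ => le_rfl
  | lam _ t => by have := two_le_weight t; simp only [weight]; omega
  | app s t => by
      have := two_le_weight s; have := two_le_weight t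
      simp only [weight]; nlinarith
  | bag _ => by simp only [weight]; omega

lemma sizeList_eq_sum (l : List RTm) : sizeList l = (l.map size).sum := by
  induction l with
  | nil => rfl
  | cons a l ih => simp [sizeList, ih]

lemma size_le_of_lSubst {t t' : RTm} {x : ℕ} {vs : List RTm} (h : LSubst t x vs t') :
    size t' ≤ size t + (vs.map size).sum := by
  induction h with
  | app _ _ hperm ihs iht | bagCons _ _ hperm ihs iht =>
      have := (hperm.map size).sum_eq
      simp only [List.map_append, List.sum_append] at this
      simp only [size, sizeList] at *; omega
  | lamNe _ _ ih => simp only [size] at *; omega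
  | _ => simp

def sizeWeight (e : RTm) : ℕ ×ₗ ℕ := toLex (size e, weight e)

lemma sizeWeight_lt_iff {e e' : RTm} : sizeWeight e' < sizeWeight e ↔
    size e' < size e ∨ size e' = size e ∧ weight e' < weight e :=
  Prod.Lex.toLex_lt_toLex

lemma sizeWeight_app_lt_left {s s' : RTm} (t : RTm) (h : sizeWeight s' < sizeWeight s) :
    sizeWeight (app s' t) < sizeWeight (app s t) := by
  have := two_le_weight t
  rw [sizeWeight_lt_iff] at *
  simp only [size, weight]
  rcases h with h | ⟨h, h'⟩
  · omega
  · exact Or.inr ⟨by omega, by nlinarith⟩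

lemma sizeWeight_app_lt_right (s : RTm) {t t' : RTm} (h : sizeWeight t' < sizeWeight t) :
    sizeWeight (app s t') < sizeWeight (app s t) := by
  have := two_le_weight s
  rw [sizeWeight_lt_iff] at *
  simp only [size, weight]
  rcases h with h | ⟨h, h'⟩
  · omega
  · exact Or.inr ⟨by omega, by nlinarith⟩

lemma sizeWeight_lam_lt (x : ℕ) {t t' : RTm} (h : sizeWeight t' < sizeWeight t) :
    sizeWeight (lam x t') < sizeWeight (lam x t) := by
  rw [sizeWeight_lt_iff] at *
  simp only [size, weight]
  omega

lemma sizeWeight_bag_lt_head {v v' : RTm} (ts : List RTm) (h : sizeWeight v' < sizeWeight v) :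
    sizeWeight (bag (v' :: ts)) < sizeWeight (bag (v :: ts)) := by
  rw [sizeWeight_lt_iff] at *
  simp only [size, sizeList, weight, weightList]
  omega

lemma sizeWeight_bag_lt_tail (v : RTm) {ts ts' : List RTm}
    (h : sizeWeight (bag ts') < sizeWeight (bag ts)) :
    sizeWeight (bag (v :: ts')) < sizeWeight (bag (v :: ts)) := by
  rw [sizeWeight_lt_iff] at *
  simp only [size, sizeList, weight, weightList] at *
  omega

lemma RStep.sizeWeight_lt {e e' : RTm} {E : Set RTm} (h : RStep e E) (he' : e' ∈ E) :
    sizeWeight e' < sizeWeight e := by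
  induction h generalizing e' with
  | beta =>
      have := size_le_of_lSubst he'
      rw [sizeWeight_lt_iff]
      simp only [size, sizeList, sizeList_eq_sum] at *
      omega
  | zero => exact absurd he' (Set.notMem_empty _)
  | @sigma1 x t s₁ s₂ =>
      obtain rfl := he'
      have := two_le_weight t; have := two_le_weight s₁; have := two_le_weight s₂
      rw [sizeWeight_lt_iff]
      simp only [size, sizeList, weight, weightList]
      exact Or.inr ⟨by omega, by nlinarith⟩
  | @sigma3 v x t s =>
      obtain rfl := he'
      have := two_le_weight t; have := two_le_weight v; have := two_le_weight s
      rw [sizeWeight_lt_iff]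
      simp only [size, sizeList, weight, weightList]
      exact Or.inr ⟨by omega, by nlinarith⟩
  | appL _ ih => obtain ⟨s', hs', rfl⟩ := he'; exact sizeWeight_app_lt_left _ (ih hs')
  | appR _ ih => obtain ⟨t', ht', rfl⟩ := he'; exact sizeWeight_app_lt_right _ (ih ht')
  | lam _ ih => obtain ⟨t', ht', rfl⟩ := he'; exact sizeWeight_lam_lt _ (ih ht')
  | bagHead _ ih => obtain ⟨v', hv', rfl⟩ := he'; exact sizeWeight_bag_lt_head _ (ih hv')
  | bagTail _ ih => obtain ⟨ts', hts', rfl⟩ := he'; exact sizeWeight_bag_lt_tail _ (ih hts')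

def Reduct (e' e : RTm) : Prop := ∃ E, RStep e E ∧ e' ∈ E

lemma wellFounded_reduct : WellFounded Reduct :=
  Subrelation.wf (fun ⟨_, h, he'⟩ => h.sizeWeight_lt he')
    (InvImage.wf sizeWeight wellFounded_lt)

/- Allowing any sub-multiset `ws` of `vs` makes the statement stable under the splittings of
`vs` in the `app` and `bagCons` rules. -/
mutual
  lemma finite_lSubst_subperm : ∀ (t : RTm) (x : ℕ) (vs : List RTm),
      {t' | ∃ ws, ws.Subperm vs ∧ LSubst t x ws t'}.Finite
    | var y, x, vs => by
        refine (vs.finite_toSet.union (Set.finite_singleton (var y))).subset ?_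
        rintro _ ⟨ws, hws, h⟩
        cases h with
        | varEq => exact Or.inl (List.singleton_subperm_iff.1 hws)
        | varNe => exact Or.inr rfl
    | lam y s, x, vs => by
        refine ((Set.finite_singleton (lam y s)).union
          ((finite_lSubst_subperm s x vs).image (lam y))).subset ?_
        rintro _ ⟨ws, hws, h⟩
        cases h with
        | lamEq => exact Or.inl rfl
        | lamNe _ hs => exact Or.inr ⟨_, ⟨ws, hws, hs⟩, rfl⟩
    | app s u, x, vs => by
        refine ((finite_lSubst_subperm s x vs).image2 app
          (finite_lSubst_subperm u x vs)).subset ?_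
        rintro _ ⟨ws, hws, h⟩
        cases h with
        | app hs hu hperm =>
            exact Set.mem_image2_of_mem ⟨_, (List.subperm_of_perm_append hperm hws).1, hs⟩
              ⟨_, (List.subperm_of_perm_append hperm hws).2, hu⟩
    | bag ts, x, vs => by
        refine ((finite_lSubst_subperm_bag ts x vs).image bag).subset ?_
        rintro _ ⟨ws, hws, h⟩
        cases h with
        | bagNil => exact ⟨[], ⟨_, hws, .bagNil x⟩, rfl⟩
        | bagCons hv hts hperm => exact ⟨_, ⟨_, hws, .bagCons hv hts hperm⟩, rfl⟩
  lemma finite_lSubst_subperm_bag : ∀ (ts : List RTm) (x : ℕ) (vs : List RTm),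
      {ts' | ∃ ws, ws.Subperm vs ∧ LSubst (bag ts) x ws (bag ts')}.Finite
    | [], x, vs => by
        refine (Set.finite_singleton []).subset ?_
        rintro _ ⟨ws, hws, h⟩
        cases h
        rfl
    | v :: ts, x, vs => by
        refine ((finite_lSubst_subperm v x vs).image2 List.cons
          (finite_lSubst_subperm_bag ts x vs)).subset ?_
        rintro _ ⟨ws, hws, h⟩
        cases h with
        | bagCons hv hts hperm =>
            exact Set.mem_image2_of_mem ⟨_, (List.subperm_of_perm_append hperm hws).1, hv⟩
              ⟨_, (List.subperm_of_perm_append hperm hws).2, hts⟩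
end

lemma finite_lSubst (t : RTm) (x : ℕ) (vs : List RTm) : {t' | LSubst t x vs t'}.Finite :=
  (finite_lSubst_subperm t x vs).subset fun _ h => ⟨vs, List.Subperm.refl vs, h⟩

lemma RStep.finite {e : RTm} {E : Set RTm} (h : RStep e E) : E.Finite := by
  induction h with
  | beta => exact finite_lSubst _ _ _
  | zero => exact Set.finite_empty
  | sigma1 | sigma3 => exact Set.finite_singleton _
  | appL _ ih | appR _ ih | lam _ ih | bagHead _ ih =>
      exact (ih.image _).subset fun _ ⟨u, hu, h⟩ => ⟨u, hu, h.symm⟩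
  | bagTail _ ih =>
      exact ((ih.preimage (fun _ _ _ _ => bag.inj)).image _).subset
        fun _ ⟨ts', hts', h⟩ => ⟨ts', hts', h.symm⟩

lemma acc_rSetStep_of_acc_cutExpand (s : Finset RTm)
    (hs : Acc (Relation.CutExpand Reduct) s.val) :
    Acc (fun S S' => RSetStep S' S) (s : Set RTm) := by
  classical
  generalize hm : s.val = m at hs
  induction hs generalizing s with
  | intro m _ ih =>
    subst hm
    refine ⟨_, fun F hF => ?_⟩
    generalize hS : (s : Set RTm) = S at hF
    obtain @⟨e, E₁, E₂, hstep, heE₂⟩ := hF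
    lift E₁ to Finset RTm using hstep.finite
    lift E₂ to Finset RTm using s.finite_toSet.subset (hS ▸ Set.subset_insert _ _)
    rw [← Finset.coe_insert, Finset.coe_inj] at hS
    subst hS
    rw [← Finset.coe_union]
    exact ih _ (Finset.cutExpand_union_insert heE₂ fun b hb => ⟨_, hstep, hb⟩) _ rfl

end RTm

/-- the resource reduction →_r (β_r, 0, σ₁, σ₃, contextually
closed and lifted to finite sets of resource terms) is strongly normalizing:
every finite set of resource terms is accessible for the reversed reduction. -/
theorem resource_reduction_sn :
    ∀ E : Set RTm, E.Finite → Acc (fun S S' => RTm.RSetStep S' S) E := by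
  intro E hE
  lift E to Finset RTm using hE
  exact RTm.acc_rSetStep_of_acc_cutExpand E (RTm.wellFounded_reduct.cutExpand.apply _)
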